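/- For every subset S ⊆ {1,…,N} of size at least 2 and every v ∈ S: if Δ₁(S,v) = −1 (i.e., rank(M_{S∖{v}} U) = rank(M_S U) − 1), then ξ₂(S∖{v}) < ξ₂(S), i.e., Δ₂(S,v) > 0; and if Δ₁(S,v) = 0 (i.e., rank(M_{S∖{v}} U) = rank(M_S U)), then ξ₂(S∖{v}) ≥ ξ₂(S), i.e., Δ₂(S,v) ≤ 0. -/

import Mathlib

open Matrix

noncomputable section

open scoped Classical in
/-- The Moore–Penrose pseudoinverse of a real matrix, characterised by the four
Penrose conditions:  `A A† A = A`, `A† A A† = A†`, `(A A†)ᵀ = A A†`, `(A† A)ᵀ = A† A`. -/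
noncomputable def pinv {m n : Type*} [Fintype m] [Fintype n] [DecidableEq m] [DecidableEq n]
    (A : Matrix m n ℝ) : Matrix n m ℝ :=
  if h : ∃ B : Matrix n m ℝ,
      A * B * A = A ∧ B * A * B = B ∧ (A * B)ᵀ = A * B ∧ (B * A)ᵀ = B * A
  then h.choose else 0

/-- The sampling matrix `M_S` of a subset `S ⊆ {1,…,N}`: rows are indexed by the
elements of `S`, and the row corresponding to `j ∈ S` is the standard basis row vector `eⱼᵀ`. -/
def samp {N : ℕ} (S : Finset (Fin N)) : Matrix {x // x ∈ S} (Fin N) ℝ :=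
  fun i j => if (i : Fin N) = j then 1 else 0

/-- Squared Frobenius norm of a matrix. -/
def frobSq {m n : Type*} [Fintype m] [Fintype n] (A : Matrix m n ℝ) : ℝ :=
  ∑ i, ∑ j, (A i j) ^ 2

/-- The least-squares reconstruction matrix `R_S = U (M_S U)†`. -/
def lsRec {N k : ℕ} (U : Matrix (Fin N) (Fin k) ℝ) (S : Finset (Fin N)) :
    Matrix (Fin N) {x // x ∈ S} ℝ :=
  U * pinv (samp S * U)

/-- `ξ₁(S) = ‖U − R_S M_S U‖_F²`, the noiseless reconstruction error. -/
def xi1 {N k : ℕ} (U : Matrix (Fin N) (Fin k) ℝ) (S : Finset (Fin N)) : ℝ :=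
  frobSq (U - lsRec U S * (samp S * U))

/-- `ξ₂(S) = ‖R_S‖_F²`, the noise-sensitivity term. -/
def xi2 {N k : ℕ} (U : Matrix (Fin N) (Fin k) ℝ) (S : Finset (Fin N)) : ℝ :=
  frobSq (lsRec U S)

/-!
Write `W_S = (M_S U)ᵀ (M_S U) = ∑_{j ∈ S} u_j u_jᵀ`, where `u_j` are the rows of `U`. Since
`Uᵀ U = 1`, one has `ξ₂(S) = tr W_S⁺` and `ξ₁(S) = k - tr (W_S⁺ W_S) = k - rank W_S`. Removing `v`
undoes the rank-one update `W_S = G + a aᵀ` with `G = W_{S∖{v}}` and `a = u_v`. Put `d = G⁺ a` and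
let `c = a - G d` be the component of `a` orthogonal to the range of `G`.
* If `c = 0` the rank is unchanged, and the Sherman–Morrison formula
  `W_S⁺ = G⁺ - d dᵀ / (1 + aᵀ d)` gives `tr W_S⁺ ≤ tr G⁺`.
* If `c ≠ 0` the rank goes up by one, and Meyer's formula
  `W_S⁺ = G⁺ - (c dᵀ + d cᵀ) / ‖c‖² + (1 + aᵀ d) c cᵀ / ‖c‖⁴` gives
  `tr W_S⁺ = tr G⁺ + (1 + aᵀ d) / ‖c‖² > tr G⁺`.
In both cases `1 + aᵀ d > 0` because `G`, hence `G⁺`, is positive semidefinite.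
-/

theorem isSymm_gram {m n : Type*} [Fintype m] (A : Matrix m n ℝ) : (Aᵀ * A).IsSymm := by
  rw [IsSymm, transpose_mul, transpose_transpose]

theorem isSymm_vecMulVec_self {n : Type*} (a : n → ℝ) : (vecMulVec a a).IsSymm :=
  transpose_vecMulVec a a

theorem isSymm_vecMulVec_add_vecMulVec {n : Type*} (c d : n → ℝ) :
    (vecMulVec c d + vecMulVec d c).IsSymm := by
  rw [IsSymm, transpose_add, transpose_vecMulVec, transpose_vecMulVec, add_comm]

theorem Matrix.IsSymm.vecMul_eq_mulVec {n : Type*} [Fintype n] {M : Matrix n n ℝ}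
    (hM : M.IsSymm) (x : n → ℝ) : x ᵥ* M = M *ᵥ x := by
  rw [← vecMul_transpose, hM.eq]

section PenroseConditions

variable {m n : Type*} [Fintype m] [Fintype n]

def IsPinv (A : Matrix m n ℝ) (B : Matrix n m ℝ) : Prop :=
  A * B * A = A ∧ B * A * B = B ∧ (A * B)ᵀ = A * B ∧ (B * A)ᵀ = B * A

namespace IsPinv

variable {A : Matrix m n ℝ} {B C : Matrix n m ℝ}

theorem unique (hB : IsPinv A B) (hC : IsPinv A C) : B = C := by
  obtain ⟨hB1, hB2, hB3, hB4⟩ := hB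
  obtain ⟨hC1, hC2, hC3, hC4⟩ := hC
  have hAB : A * B = A * C := by
    calc A * B = (A * C) * (A * B) := by rw [← Matrix.mul_assoc, hC1]
    _ = (A * C)ᵀ * (A * B)ᵀ := by rw [hC3, hB3]
    _ = Cᵀ * (A * B * A)ᵀ := by simp only [transpose_mul, Matrix.mul_assoc]
    _ = A * C := by rw [hB1, ← transpose_mul, hC3]
  have hBA : B * A = C * A := by
    calc B * A = (B * A) * (C * A) := by rw [Matrix.mul_assoc, ← Matrix.mul_assoc A C A, hC1]
    _ = (B * A)ᵀ * (C * A)ᵀ := by rw [hB4, hC4]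
    _ = (A * B * A)ᵀ * Cᵀ := by simp only [transpose_mul, Matrix.mul_assoc]
    _ = C * A := by rw [hB1, ← transpose_mul, hC4]
  calc B = B * A * B := hB2.symm
  _ = C * A * C := by rw [hBA, Matrix.mul_assoc, hAB, ← Matrix.mul_assoc]
  _ = C := hC2

theorem transpose (h : IsPinv A B) : IsPinv Aᵀ Bᵀ := by
  obtain ⟨h1, h2, h3, h4⟩ := h
  refine ⟨?_, ?_, ?_, ?_⟩
  · rw [← transpose_mul, ← transpose_mul, ← Matrix.mul_assoc, h1]
  · rw [← transpose_mul, ← transpose_mul, ← Matrix.mul_assoc, h2]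
  · rw [← transpose_mul, transpose_transpose, h4]
  · rw [← transpose_mul, transpose_transpose, h3]

theorem isSymm {A B : Matrix n n ℝ} (hA : A.IsSymm) (h : IsPinv A B) : B.IsSymm := by
  have h' := h.transpose
  rw [hA.eq] at h'
  exact h'.unique h

theorem mul_comm_of_isSymm {A B : Matrix n n ℝ} (hA : A.IsSymm) (h : IsPinv A B) :
    A * B = B * A := by
  rw [← h.2.2.1, transpose_mul, (h.isSymm hA).eq, hA.eq]

theorem of_gram {P : Matrix n n ℝ} (hP : IsPinv (Aᵀ * A) P) : IsPinv A (P * Aᵀ) := by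
  have hPs := hP.isSymm (isSymm_gram A)
  set E := A * (P * (Aᵀ * A)) - A
  have hAE : Aᵀ * E = 0 := by
    rw [Matrix.mul_sub, ← Matrix.mul_assoc, ← Matrix.mul_assoc, hP.1, sub_self]
  have hEA : Eᵀ * A = 0 := by
    rw [← transpose_transpose (Eᵀ * A), transpose_mul, transpose_transpose, hAE, transpose_zero]
  have hE : Eᵀ * E = 0 := by
    rw [Matrix.mul_sub, ← Matrix.mul_assoc, hEA, Matrix.zero_mul, sub_self]
  rw [← conjTranspose_eq_transpose_of_trivial, conjTranspose_mul_self_eq_zero, sub_eq_zero] at hE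
  refine ⟨?_, ?_, ?_, ?_⟩
  · simpa only [Matrix.mul_assoc] using hE
  · simpa only [Matrix.mul_assoc] using congrArg (· * Aᵀ) hP.2.1
  · rw [transpose_mul, transpose_mul, transpose_transpose, hPs.eq, Matrix.mul_assoc]
  · simpa only [Matrix.mul_assoc] using hP.2.2.2

end IsPinv

/-- Every function is continuous on the finite spectrum of a matrix, and `x ↦ x⁻¹` (with
`0⁻¹ = 0`) inverts exactly the nonzero eigenvalues. -/
theorem isPinv_cfc_inv [DecidableEq n] {G : Matrix n n ℝ} (hG : G.IsSymm) :
    IsPinv G (cfc (·⁻¹ : ℝ → ℝ) G) := by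
  have hsa : IsSelfAdjoint G := isHermitian_iff_isSelfAdjoint.mp (isHermitian_iff_isSymm.2 hG)
  have hmul (f g : ℝ → ℝ) : cfc f G * cfc g G = cfc (fun x => f x * g x) G :=
    (cfc_mul f g G (G.finite_real_spectrum.continuousOn f)
      (G.finite_real_spectrum.continuousOn g)).symm
  have hsymm (f : ℝ → ℝ) : (cfc f G)ᵀ = cfc f G :=
    isHermitian_iff_isSymm.1 (isHermitian_iff_isSelfAdjoint.2 (cfc_predicate f G))
  have inv_mul_inv (x : ℝ) : x⁻¹ * x * x⁻¹ = x⁻¹ := by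
    simpa only [inv_inv] using mul_inv_mul_cancel x⁻¹
  suffices IsPinv (cfc (fun x => x) G) (cfc (·⁻¹ : ℝ → ℝ) G) by rwa [cfc_id' ℝ G] at this
  simp only [IsPinv, hmul, hsymm, mul_inv_mul_cancel, inv_mul_inv, and_self]

variable [DecidableEq m] [DecidableEq n]

theorem isPinv_pinv (A : Matrix m n ℝ) : IsPinv A (pinv A) := by
  have h : ∃ B, IsPinv A B :=
    ⟨_, .of_gram (isPinv_cfc_inv (isSymm_gram A))⟩
  unfold IsPinv at h
  rw [pinv, dif_pos h]
  exact h.choose_spec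

theorem pinv_eq {A : Matrix m n ℝ} {B : Matrix n m ℝ} (h : IsPinv A B) : pinv A = B :=
  (isPinv_pinv A).unique h

theorem pinv_eq_pinv_gram_mul_transpose (A : Matrix m n ℝ) : pinv A = pinv (Aᵀ * A) * Aᵀ :=
  pinv_eq (.of_gram (isPinv_pinv _))

end PenroseConditions

section Frobenius

variable {l m n : Type*} [Fintype l] [Fintype m] [Fintype n]

theorem frobSq_eq_trace (A : Matrix m n ℝ) : frobSq A = trace (Aᵀ * A) := by
  simp only [frobSq, trace, diag, mul_apply, transpose_apply, pow_two]
  exact Finset.sum_comm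

theorem frobSq_mul_of_transpose_mul_self [DecidableEq m] {U : Matrix l m ℝ} (hU : Uᵀ * U = 1)
    (X : Matrix m n ℝ) : frobSq (U * X) = frobSq X := by
  rw [frobSq_eq_trace, frobSq_eq_trace, transpose_mul, Matrix.mul_assoc, ← Matrix.mul_assoc Uᵀ,
    hU, Matrix.one_mul]

theorem IsPinv.frobSq_one_sub_mul [DecidableEq n] {A : Matrix m n ℝ} {B : Matrix n m ℝ}
    (h : IsPinv A B) : frobSq (1 - B * A) = Fintype.card n - trace (B * A) := by
  have hsymm : (1 - B * A)ᵀ = 1 - B * A := by rw [transpose_sub, transpose_one, h.2.2.2]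
  have hidem : (1 - B * A) * (1 - B * A) = 1 - B * A := by
    rw [Matrix.sub_mul, Matrix.one_mul, Matrix.mul_sub, Matrix.mul_one, ← Matrix.mul_assoc, h.2.1,
      sub_self, sub_zero]
  rw [frobSq_eq_trace, hsymm, hidem, trace_sub, trace_one]

variable [DecidableEq m] [DecidableEq n]

theorem frobSq_pinv (A : Matrix m n ℝ) : frobSq (pinv A) = trace (pinv (Aᵀ * A)) := by
  rw [pinv_eq_pinv_gram_mul_transpose, frobSq_eq_trace, trace_mul_comm, transpose_mul,
    transpose_transpose, ((isPinv_pinv _).isSymm (isSymm_gram A)).eq, Matrix.mul_assoc,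
    ← Matrix.mul_assoc Aᵀ, ← Matrix.mul_assoc, (isPinv_pinv _).2.1]

theorem frobSq_one_sub_pinv_mul (A : Matrix m n ℝ) :
    frobSq (1 - pinv A * A) = Fintype.card n - trace (pinv (Aᵀ * A) * (Aᵀ * A)) := by
  rw [(isPinv_pinv A).frobSq_one_sub_mul, pinv_eq_pinv_gram_mul_transpose, Matrix.mul_assoc]

end Frobenius

section Sampling

variable {N k : ℕ} (U : Matrix (Fin N) (Fin k) ℝ)

def sampGram (S : Finset (Fin N)) : Matrix (Fin k) (Fin k) ℝ :=
  (samp S * U)ᵀ * (samp S * U)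

theorem samp_mul (S : Finset (Fin N)) : samp S * U = U.submatrix Subtype.val id := by
  ext i p
  simp [samp, mul_apply]

theorem sampGram_eq_sum (S : Finset (Fin N)) :
    sampGram U S = ∑ j ∈ S, vecMulVec (U j) (U j) := by
  ext p q
  simp only [sampGram, samp_mul, mul_apply, Matrix.sum_apply, transpose_apply, submatrix_apply,
    id, vecMulVec_apply]
  exact Finset.sum_coe_sort S (fun j => U j p * U j q)

theorem sampGram_erase_add {S : Finset (Fin N)} {v : Fin N} (hv : v ∈ S) :
    sampGram U (S.erase v) + vecMulVec (U v) (U v) = sampGram U S := by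
  rw [sampGram_eq_sum, sampGram_eq_sum, Finset.sum_erase_add _ _ hv]

theorem posSemidef_sampGram (S : Finset (Fin N)) : (sampGram U S).PosSemidef := by
  simpa only [sampGram, conjTranspose_eq_transpose_of_trivial] using
    posSemidef_conjTranspose_mul_self (samp S * U)

variable {U}

theorem xi2_eq_trace_pinv_sampGram (hU : Uᵀ * U = 1) (S : Finset (Fin N)) :
    xi2 U S = trace (pinv (sampGram U S)) := by
  rw [xi2, lsRec, frobSq_mul_of_transpose_mul_self hU, frobSq_pinv, sampGram]

theorem xi1_eq_sub_trace (hU : Uᵀ * U = 1) (S : Finset (Fin N)) :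
    xi1 U S = k - trace (pinv (sampGram U S) * sampGram U S) := by
  have h : U - lsRec U S * (samp S * U) = U * (1 - pinv (samp S * U) * (samp S * U)) := by
    rw [lsRec, Matrix.mul_sub, Matrix.mul_one, Matrix.mul_assoc]
  rw [xi1, h, frobSq_mul_of_transpose_mul_self hU, frobSq_one_sub_pinv_mul, Fintype.card_fin,
    sampGram]

end Sampling

section RankOneUpdate

variable {n : Type*} [Fintype n] {G P : Matrix n n ℝ} {a c d : n → ℝ}

theorem isPinv_of_isSymm {H K R : Matrix n n ℝ} (hH : H.IsSymm) (hK : K.IsSymm) (hR : R.IsSymm)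
    (hHK : H * K = R) (hRH : R * H = H) (hRK : R * K = K) : IsPinv H K := by
  have hKH : K * H = R := by rw [← hK.eq, ← hH.eq, ← transpose_mul, hHK, hR.eq]
  exact ⟨by rw [hHK, hRH], by rw [hKH, hRK], by rw [hHK, hR.eq], by rw [hKH, hR.eq]⟩

theorem IsPinv.mul_mul_self_of_isSymm (hG : G.IsSymm) (hP : IsPinv G P) : G * P * P = P := by
  rw [hP.mul_comm_of_isSymm hG, hP.2.1]

theorem IsPinv.residual (hG : G.IsSymm) (hP : IsPinv G P) (hd : P *ᵥ a = d)
    (hc : a - G *ᵥ d = c) : G *ᵥ c = 0 ∧ P *ᵥ c = 0 ∧ c ⬝ᵥ d = 0 ∧ a ⬝ᵥ c = c ⬝ᵥ c := by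
  have hGc : G *ᵥ c = 0 := by
    rw [← hc, ← hd, mulVec_sub, mulVec_mulVec, mulVec_mulVec, Matrix.mul_assoc,
      hP.mul_comm_of_isSymm hG, ← Matrix.mul_assoc, hP.1, sub_self]
  have hPc : P *ᵥ c = 0 := by
    rw [← hc, ← hd, mulVec_sub, mulVec_mulVec, mulVec_mulVec, hP.2.1, sub_self]
  have hGd : G *ᵥ d = a - c := by rw [← hc, sub_sub_cancel]
  refine ⟨hGc, hPc, ?_, ?_⟩
  · rw [← hd, dotProduct_mulVec, (hP.isSymm hG).vecMul_eq_mulVec, hPc, zero_dotProduct]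
  · rw [dotProduct_comm, ← sub_eq_zero, ← dotProduct_sub, ← hGd, dotProduct_mulVec,
      hG.vecMul_eq_mulVec, hGc, zero_dotProduct]

theorem IsPinv.add_vecMulVec_mul_of_mulVec_eq (hG : G.IsSymm) (hP : IsPinv G P) (hd : P *ᵥ a = d)
    (ha : G *ᵥ d = a) (hβ : 1 + a ⬝ᵥ d ≠ 0) :
    (G + vecMulVec a a) * (P - (1 + a ⬝ᵥ d)⁻¹ • vecMulVec d d) = G * P := by
  rw [Matrix.add_mul, Matrix.mul_sub, Matrix.mul_sub, Matrix.mul_smul, Matrix.mul_smul,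
    mul_vecMulVec, ha, vecMulVec_mul, (hP.isSymm hG).vecMul_eq_mulVec, hd,
    vecMulVec_mul_vecMulVec, vecMulVec_smul]
  linear_combination (norm := module) -(inv_mul_cancel₀ hβ • vecMulVec a d)

theorem IsPinv.add_vecMulVec_of_mulVec_eq (hG : G.IsSymm) (hP : IsPinv G P) (hd : P *ᵥ a = d)
    (ha : G *ᵥ d = a) (hβ : 1 + a ⬝ᵥ d ≠ 0) :
    IsPinv (G + vecMulVec a a) (P - (1 + a ⬝ᵥ d)⁻¹ • vecMulVec d d) := by
  refine isPinv_of_isSymm (hG.add (isSymm_vecMulVec_self a))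
    ((hP.isSymm hG).sub ((isSymm_vecMulVec_self d).smul _)) hP.2.2.1
    (hP.add_vecMulVec_mul_of_mulVec_eq hG hd ha hβ) ?_ ?_
  · rw [Matrix.mul_add, hP.1, mul_vecMulVec, ← mulVec_mulVec, hd, ha]
  · rw [Matrix.mul_sub, Matrix.mul_smul, mul_vecMulVec, ← hd, mulVec_mulVec,
      hP.mul_mul_self_of_isSymm hG]

theorem IsPinv.add_vecMulVec_mul_of_ne (hG : G.IsSymm) (hP : IsPinv G P) (hd : P *ᵥ a = d)
    (hc : a - G *ᵥ d = c) (hc0 : c ≠ 0) :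
    (G + vecMulVec a a) *
        (P - (c ⬝ᵥ c)⁻¹ • (vecMulVec c d + vecMulVec d c) +
          ((1 + a ⬝ᵥ d) / (c ⬝ᵥ c) ^ 2) • vecMulVec c c) =
      G * P + (c ⬝ᵥ c)⁻¹ • vecMulVec c c := by
  obtain ⟨hGc, -, -, hac⟩ := hP.residual hG hd hc
  have hγ : c ⬝ᵥ c * (c ⬝ᵥ c)⁻¹ = 1 := mul_inv_cancel₀ (by rwa [Ne, dotProduct_self_eq_zero])
  have hGd : G *ᵥ d = a - c := by rw [← hc, sub_sub_cancel]
  have haK : a ᵥ* (P - (c ⬝ᵥ c)⁻¹ • (vecMulVec c d + vecMulVec d c) +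
      ((1 + a ⬝ᵥ d) / (c ⬝ᵥ c) ^ 2) • vecMulVec c c) = (c ⬝ᵥ c)⁻¹ • c := by
    simp only [vecMul_add, vecMul_sub, vecMul_smul, vecMul_vecMulVec,
      (hP.isSymm hG).vecMul_eq_mulVec, hd, hac]
    linear_combination (norm := module) hγ • (((1 + a ⬝ᵥ d) * (c ⬝ᵥ c)⁻¹) • c - d)
  rw [Matrix.add_mul, vecMulVec_mul, haK]
  simp only [Matrix.mul_add, Matrix.mul_sub, Matrix.mul_smul, mul_vecMulVec, hGc, hGd,
    zero_vecMulVec, smul_zero, vecMulVec_smul, sub_vecMulVec]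
  module

theorem IsPinv.add_vecMulVec_of_ne (hG : G.IsSymm) (hP : IsPinv G P) (hd : P *ᵥ a = d)
    (hc : a - G *ᵥ d = c) (hc0 : c ≠ 0) :
    IsPinv (G + vecMulVec a a)
      (P - (c ⬝ᵥ c)⁻¹ • (vecMulVec c d + vecMulVec d c) +
        ((1 + a ⬝ᵥ d) / (c ⬝ᵥ c) ^ 2) • vecMulVec c c) := by
  set K := P - (c ⬝ᵥ c)⁻¹ • (vecMulVec c d + vecMulVec d c) +
    ((1 + a ⬝ᵥ d) / (c ⬝ᵥ c) ^ 2) • vecMulVec c c with hK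
  have hPs := hP.isSymm hG
  obtain ⟨hGc, hPc, hcd, hac⟩ := hP.residual hG hd hc
  have hγ : c ⬝ᵥ c * (c ⬝ᵥ c)⁻¹ = 1 := mul_inv_cancel₀ (by rwa [Ne, dotProduct_self_eq_zero])
  have hGd : G *ᵥ d = a - c := by rw [← hc, sub_sub_cancel]
  refine isPinv_of_isSymm (hG.add (isSymm_vecMulVec_self a))
    ((hPs.sub ((isSymm_vecMulVec_add_vecMulVec c d).smul _)).add ((isSymm_vecMulVec_self c).smul _))
    (IsSymm.add hP.2.2.1 ((isSymm_vecMulVec_self c).smul _))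
    (hP.add_vecMulVec_mul_of_ne hG hd hc hc0) ?_ ?_
  · simp only [Matrix.add_mul, Matrix.mul_add, Matrix.smul_mul, hP.1, vecMulVec_mul,
      hG.vecMul_eq_mulVec, hGc, vecMul_vecMulVec, dotProduct_comm c, hac, vecMulVec_zero]
    rw [mul_vecMulVec, ← mulVec_mulVec, hd, hGd, vecMulVec_smul, sub_vecMulVec]
    linear_combination (norm := module) hγ • vecMulVec c a
  · have hcK : c ᵥ* K = ((1 + a ⬝ᵥ d) / (c ⬝ᵥ c)) • c - d := by
      simp only [hK, vecMul_add, vecMul_sub, vecMul_smul, vecMul_vecMulVec, hPs.vecMul_eq_mulVec,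
        hPc, hcd]
      linear_combination (norm := module) hγ • (((1 + a ⬝ᵥ d) * (c ⬝ᵥ c)⁻¹) • c - d)
    have hGPK : G * P * K = P - (c ⬝ᵥ c)⁻¹ • vecMulVec d c := by
      have hGPc : (G * P) *ᵥ c = 0 := by rw [← mulVec_mulVec, hPc, mulVec_zero]
      simp only [hK, Matrix.mul_add, Matrix.mul_sub, Matrix.mul_smul, mul_vecMulVec,
        hP.mul_mul_self_of_isSymm hG, ← hd, mulVec_mulVec, hGPc, zero_vecMulVec, smul_zero]
      module
    rw [Matrix.add_mul, hGPK, Matrix.smul_mul, vecMulVec_mul, hcK, hK, vecMulVec_sub,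
      vecMulVec_smul]
    module

theorem IsPinv.dotProduct_mulVec_nonneg (hG : G.PosSemidef) (hP : IsPinv G P) (x : n → ℝ) :
    0 ≤ x ⬝ᵥ (P *ᵥ x) := by
  rw [← hP.2.1, ← mulVec_mulVec, ← mulVec_mulVec, dotProduct_mulVec,
    (hP.isSymm (isHermitian_iff_isSymm.1 hG.1)).vecMul_eq_mulVec]
  simpa only [star_trivial] using hG.dotProduct_mulVec_nonneg (P *ᵥ x)

theorem trace_pinv_add_vecMulVec [DecidableEq n] (hG : G.PosSemidef) (a : n → ℝ) :
    (trace (pinv (G + vecMulVec a a) * (G + vecMulVec a a)) = trace (pinv G * G) + 1 ∧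
        trace (pinv G) < trace (pinv (G + vecMulVec a a))) ∨
      (trace (pinv (G + vecMulVec a a) * (G + vecMulVec a a)) = trace (pinv G * G) ∧
        trace (pinv (G + vecMulVec a a)) ≤ trace (pinv G)) := by
  have hGs : G.IsSymm := isHermitian_iff_isSymm.1 hG.1
  have hP := isPinv_pinv G
  set d := pinv G *ᵥ a with hd
  set c := a - G *ᵥ d with hc
  have hβ : 0 < 1 + a ⬝ᵥ d := by linarith [hP.dotProduct_mulVec_nonneg hG a]
  have hself (v : n → ℝ) : 0 ≤ v ⬝ᵥ v := by
    simpa only [star_trivial] using dotProduct_star_self_nonneg v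
  rw [trace_mul_comm _ (G + _), trace_mul_comm (pinv G)]
  by_cases hc0 : c = 0
  · right
    have ha : G *ᵥ d = a := (sub_eq_zero.1 hc0).symm
    rw [pinv_eq (hP.add_vecMulVec_of_mulVec_eq hGs hd.symm ha hβ.ne'),
      hP.add_vecMulVec_mul_of_mulVec_eq hGs hd.symm ha hβ.ne', trace_sub, trace_smul,
      trace_vecMulVec, smul_eq_mul]
    exact ⟨rfl, sub_le_self _ (mul_nonneg (inv_nonneg.2 hβ.le) (hself d))⟩
  · left
    obtain ⟨-, -, hcd, -⟩ := hP.residual hGs hd.symm hc.symm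
    have hγ : 0 < c ⬝ᵥ c := (hself c).lt_of_ne (Ne.symm (dotProduct_self_eq_zero.not.2 hc0))
    rw [pinv_eq (hP.add_vecMulVec_of_ne hGs hd.symm hc.symm hc0),
      hP.add_vecMulVec_mul_of_ne hGs hd.symm hc.symm hc0, trace_add, trace_add, trace_sub,
      trace_smul, trace_smul, trace_smul, trace_add, trace_vecMulVec, trace_vecMulVec,
      trace_vecMulVec, dotProduct_comm d, hcd, smul_eq_mul, smul_eq_mul, smul_eq_mul,
      inv_mul_cancel₀ hγ.ne']
    refine ⟨rfl, ?_⟩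
    have := mul_pos (div_pos hβ (pow_pos hγ 2)) hγ
    linarith

end RankOneUpdate

theorem stmt14_general (N k : ℕ)
    (U : Matrix (Fin N) (Fin k) ℝ) (hU : Uᵀ * U = 1)
    (S : Finset (Fin N)) (v : Fin N) (hv : v ∈ S) :
    (xi1 U S - xi1 U (S.erase v) = -1 → xi2 U (S.erase v) < xi2 U S) ∧
    (xi1 U S - xi1 U (S.erase v) = 0 → xi2 U S ≤ xi2 U (S.erase v)) := by
  rw [xi1_eq_sub_trace hU, xi1_eq_sub_trace hU, xi2_eq_trace_pinv_sampGram hU,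
    xi2_eq_trace_pinv_sampGram hU, ← sampGram_erase_add U hv]
  rcases trace_pinv_add_vecMulVec (posSemidef_sampGram U (S.erase v)) (U v) with
    ⟨hrank, hlt⟩ | ⟨hrank, hle⟩
  · exact ⟨fun _ => hlt, fun h => by linarith⟩
  · exact ⟨fun h => by linarith, fun _ => hle⟩

/-- if `Δ₁(S,v) = −1` (i.e. removing `v` drops `rank(M_S U)` by one)
then `ξ₂(S∖{v}) < ξ₂(S)` (i.e. `Δ₂(S,v) > 0`); and if `Δ₁(S,v) = 0` (rank unchanged)
then `ξ₂(S∖{v}) ≥ ξ₂(S)` (i.e. `Δ₂(S,v) ≤ 0`). -/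
theorem stmt14 (N k : ℕ) (hN : 0 < N) (hk : 0 < k) (hkN : k ≤ N)
    (U : Matrix (Fin N) (Fin k) ℝ) (hU : Uᵀ * U = 1)
    (S : Finset (Fin N)) (hS : 2 ≤ S.card) (v : Fin N) (hv : v ∈ S) :
    (xi1 U S - xi1 U (S.erase v) = -1 → xi2 U (S.erase v) < xi2 U S) ∧
    (xi1 U S - xi1 U (S.erase v) = 0 → xi2 U S ≤ xi2 U (S.erase v)) :=
  stmt14_general N k U hU S v hv
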